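/- Let γ_0 : (t_0, ∞) → ℂ be an admissible curve with α(γ_0', 0) ≤ 1/2. For every n ∈ ℕ choose a point a_n ∈ ℂ outside the closure of γ_n((t_0, ∞)) and a continuous curve γ_{n+1} : (t_0, ∞) → ℂ with exp(γ_{n+1}(t)) = γ_n(t) − a_n for all t. Then for every n ∈ ℕ, every t_1 > t_0, and every b outside the closure of γ_n((t_1, ∞)), one has α(γ_n|_{(t_1, ∞)}, b) ≤ 2^n and α(γ_n'|_{(t_1, ∞)}, 0) ≤ 2^n − 1/2. -/

import Mathlib

open Filter Topology Set MeasureTheory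
open scoped ENNReal Real

/-- The variation number `α(γ|_{(t₀,∞)}, a)` of a curve `γ` around `a`. -/
noncomputable def variation (γ : ℝ → ℂ) (t0 : ℝ) (a : ℂ) : ℝ≥0∞ :=
  ENNReal.ofReal (1 / (2 * Real.pi)) *
    ∫⁻ t in Set.Ioi t0, ENNReal.ofReal |(deriv γ t / (γ t - a)).im|

/-- An admissible curve on `(t₀, ∞)`: injective, `C²`, nonvanishing derivative, and with
`|γ(t)| = t + O(1)`, `|γ'(t)| = 1 + O(1/t)`, `|γ''(t)| = O(1/t²)` as `t → ∞`. -/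
def Admissible (t0 : ℝ) (γ : ℝ → ℂ) : Prop :=
  Set.InjOn γ (Set.Ioi t0) ∧ ContDiffOn ℝ 2 γ (Set.Ioi t0) ∧
  (∀ t ∈ Set.Ioi t0, deriv γ t ≠ 0) ∧
  (∃ c : ℝ, ∀ᶠ t in Filter.atTop, |‖γ t‖ - t| ≤ c) ∧
  (∃ c : ℝ, ∀ᶠ t in Filter.atTop, |‖deriv γ t‖ - 1| ≤ c / t) ∧
  (∃ c : ℝ, ∀ᶠ t in Filter.atTop, ‖deriv (deriv γ) t‖ ≤ c / t ^ 2)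

/-!
Along a `C²` curve `σ`, let `θ = arg (σ - b)` and `φ = arg σ'`. Then
`θ' = Im (σ' / (σ - b)) = r sin (φ - θ)` with `r > 0`: the radius vector always turns towards the
tangent. With `d = arccos ∘ cos` the distance to `2πℤ`, this gives `|θ'| + (d ∘ (φ - θ))' ≤ |φ'|`,
and since `0 ≤ d ≤ π`, integration yields `α(σ, b) ≤ α(σ', 0) + 1/2`. For a logarithmic pullback
`g = log (σ - a)` one has `g'' / g' = σ'' / σ' - σ' / (σ - a)`, hence
`α(g', 0) ≤ α(σ', 0) + α(σ, a)`, and induction on `n` gives the bounds `2^n - 1/2` and `2^n`.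
-/

namespace Real

theorem arccos_cos_eq_norm_coe (x : ℝ) : arccos (cos x) = ‖(x : AddCircle (2 * π))‖ := by
  set n := round ((2 * π)⁻¹ * x)
  have hnorm : ‖(x : AddCircle (2 * π))‖ = |x - n * (2 * π)| := AddCircle.norm_eq (2 * π)
  have hr : |x - n * (2 * π)| ≤ π := by
    have h := AddCircle.norm_le_half_period (2 * π) (x := (x : AddCircle (2 * π))) two_pi_pos.ne'
    rwa [hnorm, abs_of_pos two_pi_pos, mul_div_cancel_left₀ _ two_ne_zero] at h
  have hcos : cos x = cos |x - n * (2 * π)| := by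
    rw [cos_abs, ← cos_add_int_mul_two_pi (x - n * (2 * π)) n, sub_add_cancel]
  rw [hnorm, hcos, arccos_cos (abs_nonneg _) hr]

theorem lipschitzWith_arccos_cos : LipschitzWith 1 (fun x => arccos (cos x)) := by
  refine LipschitzWith.of_dist_le_mul fun x y => ?_
  simp only [arccos_cos_eq_norm_coe, NNReal.coe_one, one_mul, dist_eq_norm]
  refine (abs_norm_sub_norm_le _ _).trans ?_
  rw [← AddCircle.coe_sub]
  exact QuotientAddGroup.norm_mk_le_norm

theorem hasDerivAt_arccos_cos {x : ℝ} (hx : sin x ≠ 0) :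
    HasDerivAt (fun y => arccos (cos y)) (sin x / |sin x|) x := by
  have h1 : cos x ≠ -1 := fun h => hx (sin_eq_zero_iff_cos_eq.2 (Or.inr h))
  have h2 : cos x ≠ 1 := fun h => hx (sin_eq_zero_iff_cos_eq.2 (Or.inl h))
  have h := (hasDerivAt_arccos h1 h2).comp x (hasDerivAt_cos x)
  rwa [← sin_sq, sqrt_sq_eq_abs, neg_mul_neg, one_div_mul_eq_div] at h

/-- Where `sin (ψ t) = 0` both sides vanish: the right one through `0 / 0 = 0`, the left one
because `ψ t` is then an extremum of `arccos ∘ cos`. -/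
theorem deriv_arccos_cos_comp {ψ : ℝ → ℝ} {ψ' t : ℝ} (h : HasDerivAt ψ ψ' t) :
    deriv (fun s => arccos (cos (ψ s))) t = sin (ψ t) / |sin (ψ t)| * ψ' := by
  by_cases hs : sin (ψ t) = 0
  · rw [hs, zero_div, zero_mul]
    rcases sin_eq_zero_iff_cos_eq.1 hs with hc | hc
    · refine IsLocalMin.deriv_eq_zero (Eventually.of_forall fun s => ?_)
      simp only [hc, arccos_one, arccos_nonneg]
    · refine IsLocalMax.deriv_eq_zero (Eventually.of_forall fun s => ?_)
      simp only [hc, arccos_neg_one, arccos_le_pi]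
  · exact ((hasDerivAt_arccos_cos hs).comp t h).deriv

theorem abs_add_deriv_arccos_cos_comp_le {ψ : ℝ → ℝ} {t θ' φ' r : ℝ}
    (hψ : HasDerivAt ψ (φ' - θ') t) (hr : 0 ≤ r) (hθ' : θ' = r * sin (ψ t)) :
    |θ'| + deriv (fun s => arccos (cos (ψ s))) t ≤ |φ'| := by
  rw [deriv_arccos_cos_comp hψ]
  rcases lt_trichotomy (sin (ψ t)) 0 with hs | hs | hs
  · have : θ' ≤ 0 := hθ' ▸ mul_nonpos_of_nonneg_of_nonpos hr hs.le
    rw [abs_of_neg hs, div_neg, div_self hs.ne, abs_of_nonpos this]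
    linarith [neg_abs_le φ']
  · simp [hθ', hs]
  · have : 0 ≤ θ' := hθ' ▸ mul_nonneg hr hs.le
    rw [abs_of_pos hs, div_self hs.ne', abs_of_nonneg this]
    linarith [le_abs_self φ']

end Real

open Real in
theorem integral_abs_le_integral_abs_add_pi {ψ θ' φ' : ℝ → ℝ} {a b : ℝ} (hab : a ≤ b)
    (hψ : ∀ t ∈ Icc a b, HasDerivAt ψ (φ' t - θ' t) t)
    (hθ' : ContinuousOn θ' (Icc a b)) (hφ' : ContinuousOn φ' (Icc a b))
    (hsin : ∀ t ∈ Icc a b, ∃ r, 0 ≤ r ∧ θ' t = r * sin (ψ t)) :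
    ∫ t in a..b, |θ' t| ≤ (∫ t in a..b, |φ' t|) + π := by
  set u := fun t => arccos (cos (ψ t))
  obtain ⟨M, hM⟩ := isCompact_Icc.exists_bound_of_continuousOn (hφ'.sub hθ')
  have hψ_lip : LipschitzOnWith M.toNNReal ψ (Icc a b) :=
    (convex_Icc a b).lipschitzOnWith_of_nnnorm_hasDerivWithin_le
      (fun t ht => (hψ t ht).hasDerivWithinAt) fun t ht => by
        rw [← NNReal.coe_le_coe, coe_nnnorm]
        exact (hM t ht).trans (le_max_left M 0)
  have hu : AbsolutelyContinuousOnInterval u a b := by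
    rw [← uIcc_of_le hab] at hψ_lip
    exact (lipschitzWith_arccos_cos.comp_lipschitzOnWith hψ_lip).absolutelyContinuousOnInterval
  have hpointwise : ∀ t ∈ Icc a b, |θ' t| + deriv u t ≤ |φ' t| := fun t ht => by
    obtain ⟨r, hr, hθ'r⟩ := hsin t ht
    exact abs_add_deriv_arccos_cos_comp_le (hψ t ht) hr hθ'r
  have hmono := intervalIntegral.integral_mono_on hab
    ((hθ'.abs.intervalIntegrable_of_Icc hab).add hu.intervalIntegrable_deriv)
    (hφ'.abs.intervalIntegrable_of_Icc hab) hpointwise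
  rw [intervalIntegral.integral_add (hθ'.abs.intervalIntegrable_of_Icc hab)
    hu.intervalIntegrable_deriv, hu.integral_deriv_eq_sub] at hmono
  linarith [arccos_nonneg (cos (ψ b)), arccos_le_pi (cos (ψ a))]

theorem setLIntegral_Ioi_le_of_forall_Ioc_le {f : ℝ → ℝ≥0∞} {c : ℝ} {M : ℝ≥0∞}
    (h : ∀ a b, c < a → a ≤ b → ∫⁻ t in Ioc a b, f t ≤ M) : ∫⁻ t in Ioi c, f t ≤ M := by
  set S : ℕ → Set ℝ := fun n => Ioc (c + 1 / (n + 1)) (c + (n + 1))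
  have hS : Monotone S := fun m n hmn => Ioc_subset_Ioc (by gcongr) (by gcongr)
  have hU : ⋃ n, S n = Ioi c := by
    refine Subset.antisymm (iUnion_subset fun n t ht => lt_trans (by simp; positivity) ht.1)
      fun t ht => ?_
    obtain ⟨n₁, hn₁⟩ := exists_nat_one_div_lt (sub_pos.2 (mem_Ioi.1 ht))
    obtain ⟨n₂, hn₂⟩ := exists_nat_ge (t - c)
    refine mem_iUnion.2 ⟨n₁ + n₂, ?_, ?_⟩
    · have := Nat.one_div_le_one_div (α := ℝ) (Nat.le_add_right n₁ n₂)
      linarith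
    · push_cast
      linarith [(n₁.cast_nonneg : (0 : ℝ) ≤ n₁)]
  rw [← hU, setLIntegral_iUnion_of_directed _ hS.directed_le]
  refine iSup_le fun n => h _ _ (by simp; positivity) ?_
  have := Nat.one_div_le_one_div (α := ℝ) (Nat.zero_le n)
  push_cast at this ⊢
  linarith [(n.cast_nonneg : (0 : ℝ) ≤ n)]

open Real in
theorem setLIntegral_abs_le_setLIntegral_abs_add_pi {ψ θ' φ' : ℝ → ℝ} {c : ℝ}
    (hψ : ∀ t ∈ Ioi c, HasDerivAt ψ (φ' t - θ' t) t)
    (hθ' : ContinuousOn θ' (Ioi c)) (hφ' : ContinuousOn φ' (Ioi c))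
    (hsin : ∀ t ∈ Ioi c, ∃ r, 0 ≤ r ∧ θ' t = r * sin (ψ t)) :
    ∫⁻ t in Ioi c, ENNReal.ofReal |θ' t| ≤
      (∫⁻ t in Ioi c, ENNReal.ofReal |φ' t|) + ENNReal.ofReal π := by
  refine setLIntegral_Ioi_le_of_forall_Ioc_le fun a b ha hab => ?_
  have hsub : Icc a b ⊆ Ioi c := fun t ht => ha.trans_le ht.1
  have hofReal {f : ℝ → ℝ} (hf : ContinuousOn f (Ioi c)) :
      ∫⁻ t in Ioc a b, ENNReal.ofReal |f t| = ENNReal.ofReal (∫ t in a..b, |f t|) := by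
    simp_rw [← Real.enorm_eq_ofReal_abs, ← Real.norm_eq_abs, intervalIntegral.integral_of_le hab]
    exact (ofReal_integral_norm_eq_lintegral_enorm
      ((hf.mono hsub).integrableOn_Icc.mono_set Ioc_subset_Icc_self)).symm
  calc ∫⁻ t in Ioc a b, ENNReal.ofReal |θ' t|
      ≤ ENNReal.ofReal ((∫ t in a..b, |φ' t|) + π) := by
        rw [hofReal hθ']
        exact ENNReal.ofReal_le_ofReal <| integral_abs_le_integral_abs_add_pi hab
          (fun t ht => hψ t (hsub ht)) (hθ'.mono hsub) (hφ'.mono hsub) fun t ht => hsin t (hsub ht)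
    _ = (∫⁻ t in Ioc a b, ENNReal.ofReal |φ' t|) + ENNReal.ofReal π := by
        rw [hofReal hφ', ENNReal.ofReal_add
          (intervalIntegral.integral_nonneg hab fun _ _ => abs_nonneg _) pi_pos.le]
    _ ≤ (∫⁻ t in Ioi c, ENNReal.ofReal |φ' t|) + ENNReal.ofReal π := by
        gcongr
        exact fun t ht => ha.trans ht.1

namespace Complex

theorem hasDerivAt_of_exp_eq {f g : ℝ → ℂ} {f' : ℂ} {t : ℝ} (hg : ContinuousAt g t)
    (hfg : ∀ᶠ s in 𝓝 t, exp (g s) = f s) (hf : HasDerivAt f f' t) :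
    HasDerivAt g (f' / f t) t := by
  have hft : exp (g t) = f t := hfg.self_of_nhds
  have hf0 : f t ≠ 0 := hft ▸ exp_ne_zero _
  have hnear : ∀ᶠ s in 𝓝 t, g s = g t + log (f s / f t) := by
    filter_upwards [hfg, hg.eventually (Metric.ball_mem_nhds _ Real.pi_pos)] with s hs hd
    have him := (abs_im_le_norm (g s - g t)).trans_lt (dist_eq_norm (g s) (g t) ▸ hd)
    rw [← hs, ← hft, ← exp_sub, log_exp (by linarith [neg_abs_le (g s - g t).im])
      (by linarith [le_abs_self (g s - g t).im])]
    ring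
  have hlog := ((hf.div_const (f t)).clog_real (by simp [div_self hf0])).const_add (g t)
  rw [div_self hf0, div_one] at hlog
  exact hlog.congr_of_eventuallyEq hnear

theorem exists_exp_eq_of_hasDerivAt {f f' : ℝ → ℂ} {c : ℝ}
    (hf : ∀ t ∈ Ioi c, HasDerivAt f (f' t) t) (hf' : ContinuousOn f' (Ioi c))
    (hf0 : ∀ t ∈ Ioi c, f t ≠ 0) :
    ∃ L : ℝ → ℂ, ∀ t ∈ Ioi c, HasDerivAt L (f' t / f t) t ∧ exp (L t) = f t := by
  have hc : c + 1 ∈ Ioi c := lt_add_one c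
  have hq : ContinuousOn (fun t => f' t / f t) (Ioi c) :=
    hf'.div (fun t ht => (hf t ht).continuousAt.continuousWithinAt) hf0
  set P := fun t => ∫ s in (c + 1)..t, f' s / f s
  have hP : ∀ t ∈ Ioi c, HasDerivAt P (f' t / f t) t := fun t ht =>
    intervalIntegral.integral_hasDerivAt_right
      (hq.mono (ordConnected_Ioi.uIcc_subset hc ht)).intervalIntegrable
      (hq.stronglyMeasurableAtFilter isOpen_Ioi t ht) (hq.continuousAt (Ioi_mem_nhds ht))
  have hconst : ∀ t ∈ Ioi c, f t * exp (-P t) = f (c + 1) := by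
    have hd : ∀ t ∈ Ioi c, HasDerivAt (fun s => f s * exp (-P s)) 0 t := fun t ht => by
      refine ((hf t ht).mul (hP t ht).neg.cexp).congr_deriv ?_
      field_simp [hf0 t ht]
      ring
    intro t ht
    simpa [P] using isOpen_Ioi.is_const_of_deriv_eq_zero isPreconnected_Ioi
      (fun s hs => (hd s hs).differentiableAt.differentiableWithinAt)
      (fun s hs => (hd s hs).deriv) ht hc
  refine ⟨fun t => P t + log (f (c + 1)), fun t ht => ⟨(hP t ht).add_const _, ?_⟩⟩
  rw [exp_add, exp_log (hf0 _ hc), ← hconst t ht, mul_comm, mul_assoc, ← exp_add,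
    neg_add_cancel, exp_zero, mul_one]

end Complex

theorem HasDerivAt.im {f : ℝ → ℂ} {z : ℂ} {t : ℝ} (h : HasDerivAt f z t) :
    HasDerivAt (fun s => (f s).im) z.im t :=
  Complex.imCLM.hasFDerivAt.comp_hasDerivAt t h

theorem setLIntegral_abs_im_div_sub_le {σ : ℝ → ℂ} {c : ℝ} {b : ℂ} (hσ : ContDiffOn ℝ 2 σ (Ioi c))
    (hσ' : ∀ t ∈ Ioi c, deriv σ t ≠ 0) (hb : ∀ t ∈ Ioi c, σ t ≠ b) :
    ∫⁻ t in Ioi c, ENNReal.ofReal |(deriv σ t / (σ t - b)).im| ≤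
      (∫⁻ t in Ioi c, ENNReal.ofReal |(deriv (deriv σ) t / deriv σ t).im|) + ENNReal.ofReal π := by
  have hσ₁ : ContDiffOn ℝ 1 (deriv σ) (Ioi c) := hσ.deriv_of_isOpen isOpen_Ioi (by norm_num)
  have hd₁ : ∀ t ∈ Ioi c, HasDerivAt σ (deriv σ t) t := fun t ht =>
    (hσ.differentiableOn two_ne_zero).hasDerivAt (Ioi_mem_nhds ht)
  have hd₂ : ∀ t ∈ Ioi c, HasDerivAt (deriv σ) (deriv (deriv σ) t) t := fun t ht =>
    (hσ₁.differentiableOn one_ne_zero).hasDerivAt (Ioi_mem_nhds ht)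
  have hsub : ∀ t ∈ Ioi c, σ t - b ≠ 0 := fun t ht => sub_ne_zero.2 (hb t ht)
  obtain ⟨L₁, hL₁⟩ := Complex.exists_exp_eq_of_hasDerivAt hd₂
    (hσ₁.continuousOn_deriv_of_isOpen isOpen_Ioi le_rfl) hσ'
  obtain ⟨L₂, hL₂⟩ := Complex.exists_exp_eq_of_hasDerivAt (fun t ht => (hd₁ t ht).sub_const b)
    hσ₁.continuousOn hsub
  refine setLIntegral_abs_le_setLIntegral_abs_add_pi (ψ := fun t => (L₁ t - L₂ t).im)
    (fun t ht => ?_) ?_ ?_ fun t ht => ⟨Real.exp (L₁ t - L₂ t).re, (Real.exp_pos _).le, ?_⟩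
  · simpa using ((hL₁ t ht).1.sub (hL₂ t ht).1).im
  · exact Complex.continuous_im.comp_continuousOn
      (hσ₁.continuousOn.div (hσ.continuousOn.sub continuousOn_const) hsub)
  · exact Complex.continuous_im.comp_continuousOn
      ((hσ₁.continuousOn_deriv_of_isOpen isOpen_Ioi le_rfl).div hσ₁.continuousOn hσ')
  · rw [← Complex.exp_im, Complex.exp_sub, (hL₁ t ht).2, (hL₂ t ht).2]

theorem variation_le_variation_deriv_add_half {σ : ℝ → ℂ} {c : ℝ} {b : ℂ}
    (hσ : ContDiffOn ℝ 2 σ (Ioi c)) (hσ' : ∀ t ∈ Ioi c, deriv σ t ≠ 0)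
    (hb : ∀ t ∈ Ioi c, σ t ≠ b) :
    variation σ c b ≤ variation (deriv σ) c 0 + ENNReal.ofReal (1 / 2) := by
  have hπ : ENNReal.ofReal (1 / (2 * π)) * ENNReal.ofReal π = ENNReal.ofReal (1 / 2) := by
    rw [← ENNReal.ofReal_mul (by positivity)]
    field_simp
  simp only [variation, sub_zero, ← hπ, ← mul_add]
  gcongr
  exact setLIntegral_abs_im_div_sub_le hσ hσ' hb

section Pullback

variable {σ g : ℝ → ℂ} {c : ℝ} {a : ℂ}

theorem hasDerivAt_of_exp_eq_sub (hσ : DifferentiableOn ℝ σ (Ioi c))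
    (hg : ContinuousOn g (Ioi c)) (hexp : ∀ t ∈ Ioi c, Complex.exp (g t) = σ t - a)
    ⦃t : ℝ⦄ (ht : t ∈ Ioi c) : HasDerivAt g (deriv σ t / (σ t - a)) t :=
  Complex.hasDerivAt_of_exp_eq (f := fun s => σ s - a) (hg.continuousAt (Ioi_mem_nhds ht))
    (eventually_of_mem (Ioi_mem_nhds ht) hexp) ((hσ.hasDerivAt (Ioi_mem_nhds ht)).sub_const a)

theorem contDiffOn_two_of_exp_eq_sub (hσ : ContDiffOn ℝ 2 σ (Ioi c))
    (hσ' : ∀ t ∈ Ioi c, deriv σ t ≠ 0) (hg : ContinuousOn g (Ioi c))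
    (hexp : ∀ t ∈ Ioi c, Complex.exp (g t) = σ t - a) :
    ContDiffOn ℝ 2 g (Ioi c) ∧ ∀ t ∈ Ioi c, deriv g t ≠ 0 := by
  have hd := hasDerivAt_of_exp_eq_sub (hσ.differentiableOn two_ne_zero) hg hexp
  have hne : ∀ t ∈ Ioi c, σ t - a ≠ 0 := fun t ht => hexp t ht ▸ Complex.exp_ne_zero _
  refine ⟨?_, fun t ht => (hd ht).deriv ▸ div_ne_zero (hσ' t ht) (hne t ht)⟩
  rw [show (2 : WithTop ℕ∞) = 1 + 1 from rfl, contDiffOn_succ_iff_deriv_of_isOpen isOpen_Ioi]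
  refine ⟨fun t ht => (hd ht).differentiableAt.differentiableWithinAt, by simp, ?_⟩
  refine ((hσ.deriv_of_isOpen isOpen_Ioi le_rfl).mul
    (((hσ.of_le one_le_two).sub contDiffOn_const).inv hne)).congr fun t ht => ?_
  rw [(hd ht).deriv, div_eq_mul_inv]
  rfl

theorem deriv_deriv_div_deriv_of_exp_eq_sub (hσ : ContDiffOn ℝ 2 σ (Ioi c))
    (hσ' : ∀ t ∈ Ioi c, deriv σ t ≠ 0) (hg : ContinuousOn g (Ioi c))
    (hexp : ∀ t ∈ Ioi c, Complex.exp (g t) = σ t - a) {t : ℝ} (ht : t ∈ Ioi c) :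
    deriv (deriv g) t / deriv g t =
      deriv (deriv σ) t / deriv σ t - deriv σ t / (σ t - a) := by
  have hd := hasDerivAt_of_exp_eq_sub (hσ.differentiableOn two_ne_zero) hg hexp
  have hne : σ t - a ≠ 0 := hexp t ht ▸ Complex.exp_ne_zero _
  have hσ₁ : ContDiffOn ℝ 1 (deriv σ) (Ioi c) := hσ.deriv_of_isOpen isOpen_Ioi le_rfl
  have hdd := (((hσ₁.differentiableOn one_ne_zero).hasDerivAt (Ioi_mem_nhds ht)).div
    (((hσ.differentiableOn two_ne_zero).hasDerivAt (Ioi_mem_nhds ht)).sub_const a) hne)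
  rw [(hdd.congr_of_eventuallyEq (eventually_of_mem (Ioi_mem_nhds ht)
    fun s hs => (hd hs).deriv)).deriv, (hd ht).deriv]
  field_simp [hσ' t ht]

theorem variation_deriv_le_of_exp_eq_sub (hσ : ContDiffOn ℝ 2 σ (Ioi c))
    (hσ' : ∀ t ∈ Ioi c, deriv σ t ≠ 0) (hg : ContinuousOn g (Ioi c))
    (hexp : ∀ t ∈ Ioi c, Complex.exp (g t) = σ t - a) :
    variation (deriv g) c 0 ≤ variation (deriv σ) c 0 + variation σ c a := by
  have hσ₁ : ContDiffOn ℝ 1 (deriv σ) (Ioi c) := hσ.deriv_of_isOpen isOpen_Ioi le_rfl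
  have hmeas : AEMeasurable (fun t => ENNReal.ofReal |(deriv (deriv σ) t / deriv σ t).im|)
      (volume.restrict (Ioi c)) :=
    ENNReal.measurable_ofReal.comp_aemeasurable <| ContinuousOn.aemeasurable
      (Complex.continuous_im.comp_continuousOn
        ((hσ₁.continuousOn_deriv_of_isOpen isOpen_Ioi le_rfl).div hσ₁.continuousOn hσ')).abs
      measurableSet_Ioi
  simp only [variation, sub_zero, ← mul_add]
  gcongr
  rw [← lintegral_add_left' hmeas]
  refine setLIntegral_mono' measurableSet_Ioi fun t ht => ?_
  rw [deriv_deriv_div_deriv_of_exp_eq_sub hσ hσ' hg hexp ht, Complex.sub_im,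
    ← ENNReal.ofReal_add (abs_nonneg _) (abs_nonneg _)]
  exact ENNReal.ofReal_le_ofReal (abs_sub _ _)

end Pullback

theorem antitone_variation (f : ℝ → ℂ) (a : ℂ) : Antitone fun t => variation f t a :=
  fun _ _ hst => by
    simp only [variation]
    gcongr

theorem ofReal_two_pow_sub_half_add_half (n : ℕ) :
    ENNReal.ofReal ((2 : ℝ) ^ n - 1 / 2) + ENNReal.ofReal (1 / 2) = ENNReal.ofReal (2 ^ n) := by
  rw [← ENNReal.ofReal_add (by linarith [one_le_pow₀ (M₀ := ℝ) one_le_two (n := n)]) (by norm_num),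
    sub_add_cancel]

theorem variation_deriv_pullback_le_two_pow_sub_half {γ : ℕ → ℝ → ℂ} {a : ℕ → ℂ} {c : ℝ}
    (h0 : ContDiffOn ℝ 2 (γ 0) (Ioi c)) (h0' : ∀ t ∈ Ioi c, deriv (γ 0) t ≠ 0)
    (hα : variation (deriv (γ 0)) c 0 ≤ ENNReal.ofReal (1 / 2))
    (hcont : ∀ n, ContinuousOn (γ (n + 1)) (Ioi c))
    (hexp : ∀ n, ∀ t ∈ Ioi c, Complex.exp (γ (n + 1) t) = γ n t - a n) (n : ℕ) :
    ContDiffOn ℝ 2 (γ n) (Ioi c) ∧ (∀ t ∈ Ioi c, deriv (γ n) t ≠ 0) ∧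
      variation (deriv (γ n)) c 0 ≤ ENNReal.ofReal (2 ^ n - 1 / 2) := by
  induction n with
  | zero => exact ⟨h0, h0', hα.trans_eq (by norm_num)⟩
  | succ n ih =>
    obtain ⟨hγ, hγ', hvar⟩ := ih
    have ha : ∀ t ∈ Ioi c, γ n t ≠ a n := fun t ht =>
      sub_ne_zero.1 (hexp n t ht ▸ Complex.exp_ne_zero _)
    obtain ⟨hγ₁, hγ₁'⟩ := contDiffOn_two_of_exp_eq_sub hγ hγ' (hcont n) (hexp n)
    refine ⟨hγ₁, hγ₁', ?_⟩
    calc variation (deriv (γ (n + 1))) c 0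
        ≤ variation (deriv (γ n)) c 0 + variation (γ n) c (a n) :=
          variation_deriv_le_of_exp_eq_sub hγ hγ' (hcont n) (hexp n)
      _ ≤ ENNReal.ofReal (2 ^ n - 1 / 2) +
            (ENNReal.ofReal (2 ^ n - 1 / 2) + ENNReal.ofReal (1 / 2)) :=
          add_le_add hvar ((variation_le_variation_deriv_add_half hγ hγ' ha).trans
            (by gcongr))
      _ = ENNReal.ofReal (2 ^ (n + 1) - 1 / 2) := by
          rw [ofReal_two_pow_sub_half_add_half, ← ENNReal.ofReal_add
            (by linarith [one_le_pow₀ (M₀ := ℝ) one_le_two (n := n)]) (by positivity)]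
          ring_nf

theorem variation_numbers_pullbacks_general (t0 : ℝ) (γ : ℕ → ℝ → ℂ) (a : ℕ → ℂ)
    (h0 : Admissible t0 (γ 0))
    (hα : variation (deriv (γ 0)) t0 0 ≤ ENNReal.ofReal (1 / 2))
    (hcont : ∀ n : ℕ, ContinuousOn (γ (n + 1)) (Set.Ioi t0))
    (hexp : ∀ n : ℕ, ∀ t ∈ Set.Ioi t0, Complex.exp (γ (n + 1) t) = γ n t - a n) :
    ∀ n : ℕ, ∀ t1 : ℝ, t0 < t1 → ∀ b : ℂ, b ∉ closure (γ n '' Set.Ioi t1) →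
      variation (γ n) t1 b ≤ ENNReal.ofReal ((2 : ℝ) ^ n) ∧
      variation (deriv (γ n)) t1 0 ≤ ENNReal.ofReal ((2 : ℝ) ^ n - 1 / 2) := by
  intro n t1 ht1 b hb
  have hsub : Ioi t1 ⊆ Ioi t0 := Ioi_subset_Ioi ht1.le
  obtain ⟨hγ, hγ', hvar⟩ := variation_deriv_pullback_le_two_pow_sub_half
    (h0.2.1.mono hsub) (fun t ht => h0.2.2.1 t (hsub ht))
    ((antitone_variation _ _ ht1.le).trans hα) (fun n => (hcont n).mono hsub)
    (fun n t ht => hexp n t (hsub ht)) n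
  refine ⟨?_, hvar⟩
  rw [← ofReal_two_pow_sub_half_add_half]
  exact (variation_le_variation_deriv_add_half hγ hγ' fun t ht hbt =>
    hb (subset_closure ⟨t, ht, hbt⟩)).trans (by gcongr)

/-- **Variation Numbers and Pullbacks.**
Let `γ₀` be an admissible curve on `(t₀, ∞)` with `α(γ₀', 0) ≤ 1/2`. For every `n` choose
`a_n` outside the closure of the image of `γ_n` and a continuous `γ_{n+1}` with
`exp(γ_{n+1}(t)) = γ_n(t) - a_n`. Then for every `n`, every `t₁ > t₀` and every `b`
outside the closure of `γ_n((t₁, ∞))`, one has `α(γ_n|_{(t₁,∞)}, b) ≤ 2^n` and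
`α(γ_n'|_{(t₁,∞)}, 0) ≤ 2^n - 1/2`. -/
theorem variation_numbers_pullbacks (t0 : ℝ) (γ : ℕ → ℝ → ℂ) (a : ℕ → ℂ)
    (h0 : Admissible t0 (γ 0))
    (hα : variation (deriv (γ 0)) t0 0 ≤ ENNReal.ofReal (1 / 2))
    (ha : ∀ n : ℕ, a n ∉ closure (γ n '' Set.Ioi t0))
    (hcont : ∀ n : ℕ, ContinuousOn (γ (n + 1)) (Set.Ioi t0))
    (hexp : ∀ n : ℕ, ∀ t ∈ Set.Ioi t0, Complex.exp (γ (n + 1) t) = γ n t - a n) :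
    ∀ n : ℕ, ∀ t1 : ℝ, t0 < t1 → ∀ b : ℂ, b ∉ closure (γ n '' Set.Ioi t1) →
      variation (γ n) t1 b ≤ ENNReal.ofReal ((2 : ℝ) ^ n) ∧
      variation (deriv (γ n)) t1 0 ≤ ENNReal.ofReal ((2 : ℝ) ^ n - 1 / 2) :=
  variation_numbers_pullbacks_general t0 γ a h0 hα hcont hexp
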